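/- arXiv:2105.11415 — 2 statements merged into one kernel-verified Lean document; each statement's English description precedes it below -/
import Mathlib

section
/- Let H ∈ ℂ^{Nr×Nt} and let Q, Z ∈ ℂ^{Nt×Nt} be Hermitian positive semidefinite. Set Γ = H†H Q. Then tr(((I + Γ)⁻¹Γ − I) Z Q) ≤ 0; equivalently, with Φ = H†(I + H Q H†)⁻¹H, tr((ΦQ − I) Z Q) ≤ 0. -/
open Matrix
open scoped ComplexOrder

/-!
Write `A = HᴴH`, so `Γ = AQ`. From `(1 + Γ)⁻¹ Γ - 1 = -(1 + Γ)⁻¹` and the push-through identity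
`Hᴴ (1 + HQHᴴ)⁻¹ = (1 + HᴴHQ)⁻¹ Hᴴ`, which gives `ΦQ = (1 + Γ)⁻¹ Γ`, both traces equal
`-tr((1 + AQ)⁻¹ Z Q)`. Factor `Q = CᴴC`; cycling `C` to the front and pushing it through the
inverse turns this into `-tr((1 + CACᴴ)⁻¹ (CZCᴴ))`, minus the trace of a product of two positive
semidefinite matrices, hence a nonpositive real.
-/

namespace Matrix

section PushThrough

variable {m n α : Type*} [Fintype m] [Fintype n] [DecidableEq m] [DecidableEq n] [CommRing α]

/-- No invertibility is needed: by `det_one_add_mul_comm` either both inverses are genuine or both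
are the junk value `0`. -/
theorem mul_inv_one_add_mul_comm (X : Matrix m n α) (Y : Matrix n m α) :
    Y * (1 + X * Y)⁻¹ = (1 + Y * X)⁻¹ * Y := by
  by_cases h : IsUnit (1 + X * Y).det
  · have h' : IsUnit (1 + Y * X).det := by rwa [← det_one_add_mul_comm]
    have hcomm : (1 + Y * X) * Y = Y * (1 + X * Y) := by
      simp only [Matrix.add_mul, Matrix.mul_add, Matrix.one_mul, Matrix.mul_one, Matrix.mul_assoc]
    calc Y * (1 + X * Y)⁻¹ = (1 + Y * X)⁻¹ * ((1 + Y * X) * Y) * (1 + X * Y)⁻¹ := by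
          rw [← Matrix.mul_assoc, nonsing_inv_mul _ h', Matrix.one_mul]
      _ = (1 + Y * X)⁻¹ * Y := by
          rw [hcomm, Matrix.mul_assoc, Matrix.mul_assoc, mul_nonsing_inv _ h, Matrix.mul_one]
  · have h' : ¬IsUnit (1 + Y * X).det := by rwa [← det_one_add_mul_comm]
    rw [nonsing_inv_apply_not_isUnit _ h, nonsing_inv_apply_not_isUnit _ h', Matrix.mul_zero,
      Matrix.zero_mul]

end PushThrough

section PosSemidef

variable {n 𝕜 : Type*} [Fintype n] [DecidableEq n] [RCLike 𝕜]

theorem PosSemidef.exists_eq_conjTranspose_mul_self {A : Matrix n n 𝕜} (hA : A.PosSemidef) :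
    ∃ C : Matrix n n 𝕜, A = Cᴴ * C := by
  open scoped MatrixOrder in
  exact CStarAlgebra.nonneg_iff_eq_star_mul_self.mp hA.nonneg

theorem PosSemidef.trace_mul_nonneg {A B : Matrix n n 𝕜} (hA : A.PosSemidef)
    (hB : B.PosSemidef) : 0 ≤ (A * B).trace := by
  obtain ⟨D, rfl⟩ := hB.exists_eq_conjTranspose_mul_self
  rw [← Matrix.mul_assoc, trace_mul_cycle]
  exact (hA.mul_mul_conjTranspose_same D).trace_nonneg

theorem PosSemidef.isUnit_det_one_add_mul {A Q : Matrix n n 𝕜} (hA : A.PosSemidef)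
    (hQ : Q.PosSemidef) : IsUnit (1 + A * Q).det := by
  obtain ⟨C, rfl⟩ := hQ.exists_eq_conjTranspose_mul_self
  rw [← Matrix.mul_assoc, det_one_add_mul_comm, ← Matrix.mul_assoc C, ← isUnit_iff_isUnit_det]
  exact (PosDef.one.add_posSemidef (hA.mul_mul_conjTranspose_same C)).isUnit

theorem PosSemidef.trace_inv_one_add_mul_mul_mul_nonneg {A Q Z : Matrix n n 𝕜}
    (hA : A.PosSemidef) (hQ : Q.PosSemidef) (hZ : Z.PosSemidef) :
    0 ≤ ((1 + A * Q)⁻¹ * Z * Q).trace := by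
  obtain ⟨C, rfl⟩ := hQ.exists_eq_conjTranspose_mul_self
  have hcycle : ((1 + A * (Cᴴ * C))⁻¹ * Z * (Cᴴ * C)).trace
      = (C * (1 + A * Cᴴ * C)⁻¹ * (Z * Cᴴ)).trace := by
    rw [Matrix.mul_assoc C, trace_mul_comm C]
    simp only [Matrix.mul_assoc]
  rw [hcycle, mul_inv_one_add_mul_comm (A * Cᴴ) C, Matrix.mul_assoc _ C, ← Matrix.mul_assoc C Z,
    ← Matrix.mul_assoc C A]
  exact (PosSemidef.one.add (hA.mul_mul_conjTranspose_same C)).inv.trace_mul_nonneg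
    (hZ.mul_mul_conjTranspose_same C)

end PosSemidef

end Matrix

/-- For Hermitian positive semidefinite `Q, Z` and `Γ = HᴴH Q`,
the (real) quantity `tr(((I + Γ)⁻¹Γ − I) Z Q)` is nonpositive; equivalently, with
`Φ = Hᴴ(I + H Q Hᴴ)⁻¹H`, `tr((ΦQ − I) Z Q) ≤ 0`. -/
theorem stmt_8 {Nr Nt : ℕ}
    (H : Matrix (Fin Nr) (Fin Nt) ℂ)
    (Q Z : Matrix (Fin Nt) (Fin Nt) ℂ)
    (hQ : Q.PosSemidef) (hZ : Z.PosSemidef)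
    (Γ Φ : Matrix (Fin Nt) (Fin Nt) ℂ)
    (hΓ : Γ = Hᴴ * H * Q)
    (hΦ : Φ = Hᴴ * (1 + H * Q * Hᴴ)⁻¹ * H) :
    ∃ r : ℝ, r ≤ 0 ∧
      Matrix.trace (((1 + Γ)⁻¹ * Γ - 1) * Z * Q) = (r : ℂ) ∧
      Matrix.trace ((Φ * Q - 1) * Z * Q) = (r : ℂ) := by
  have hA : (Hᴴ * H).PosSemidef := posSemidef_conjTranspose_mul_self H
  have hΦQ : Φ * Q = (1 + Γ)⁻¹ * Γ := by
    rw [hΦ, hΓ, mul_inv_one_add_mul_comm (H * Q) Hᴴ]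
    simp only [Matrix.mul_assoc]
  have hsub : (1 + Γ)⁻¹ * Γ - 1 = -(1 + Γ)⁻¹ := by
    have hinv := nonsing_inv_mul _ (hΓ ▸ hA.isUnit_det_one_add_mul hQ)
    rw [Matrix.mul_add, Matrix.mul_one] at hinv
    rw [sub_eq_iff_eq_add, eq_neg_add_iff_add_eq, hinv]
  have hnonneg : 0 ≤ ((1 + Γ)⁻¹ * Z * Q).trace :=
    hΓ ▸ hA.trace_inv_one_add_mul_mul_mul_nonneg hQ hZ
  obtain ⟨hre, him⟩ := Complex.nonneg_iff.mp hnonneg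
  have htrace : (((1 + Γ)⁻¹ * Γ - 1) * Z * Q).trace
      = ((-((1 + Γ)⁻¹ * Z * Q).trace.re : ℝ) : ℂ) := by
    rw [hsub, Matrix.neg_mul, Matrix.neg_mul, trace_neg]
    exact Complex.ext (by simp) (by simp [← him])
  exact ⟨_, by linarith, htrace, hΦQ ▸ htrace⟩
end

section
/- Let H ∈ ℂ^{Nr×Nt} and let X, Y ∈ ℂ^{Nt×Nt} be Hermitian positive semidefinite. Then ‖H†(I + H X H†)⁻¹H (Y − X) H†(I + H Y H†)⁻¹H‖_F ≤ σ_max²(H†H) ‖X − Y‖_F, where ‖·‖_F is the Frobenius norm and σ_max(·) the largest singular value. -/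
open Matrix
open scoped ComplexOrder

/-- The Frobenius norm `‖M‖_F = sqrt(tr(Mᴴ M))` of a complex matrix. -/
noncomputable def frobNorm {m n : ℕ} (M : Matrix (Fin m) (Fin n) ℂ) : ℝ :=
  Real.sqrt (Matrix.trace (Mᴴ * M)).re

/-- The largest singular value of a square complex matrix, i.e. the operator norm
of the associated continuous linear endomorphism of Euclidean space. -/
noncomputable def sigmaMax {n : ℕ} (M : Matrix (Fin n) (Fin n) ℂ) : ℝ :=
  ‖Matrix.toEuclideanCLM (𝕜 := ℂ) M‖

/-!
Measure the middle factor `Y - X` in the Frobenius norm and the two outer factors in the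
spectral norm, using `‖A M B‖_F ≤ ‖A‖ ‖M‖_F ‖B‖`. For `Q ⪰ 0` we have `1 ≤ 1 + Q` in the
Loewner order, hence `0 ≤ (1 + Q)⁻¹ ≤ 1` and `‖(1 + Q)⁻¹‖ ≤ 1`; therefore
`‖Hᴴ (1 + Q)⁻¹ H‖ ≤ ‖Hᴴ‖ ‖H‖ = ‖Hᴴ H‖` by the C⋆-identity.
-/

open scoped Matrix.Norms.L2Operator MatrixOrder

section frobNorm

variable {k m n : ℕ}

lemma frobNorm_nonneg (M : Matrix (Fin m) (Fin n) ℂ) : 0 ≤ frobNorm M := Real.sqrt_nonneg _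

lemma frobNorm_sq (M : Matrix (Fin m) (Fin n) ℂ) :
    frobNorm M ^ 2 = ∑ j, ‖WithLp.toLp 2 (Mᵀ j)‖ ^ 2 := by
  have h : (trace (Mᴴ * M)).re = ∑ j, ‖WithLp.toLp 2 (Mᵀ j)‖ ^ 2 := by
    simp only [trace, diag_apply, mul_apply, conjTranspose_apply, RCLike.star_def, Complex.re_sum,
      Complex.mul_re, Complex.conj_re, Complex.conj_im, neg_mul, sub_neg_eq_add,
      EuclideanSpace.norm_sq_eq, transpose_apply, Complex.sq_norm, Complex.normSq_apply]
  rw [frobNorm, Real.sq_sqrt (h ▸ by positivity), h]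

lemma frobNorm_conjTranspose (M : Matrix (Fin m) (Fin n) ℂ) : frobNorm Mᴴ = frobNorm M := by
  rw [frobNorm, frobNorm, conjTranspose_conjTranspose, trace_mul_comm]

lemma frobNorm_sub_comm (A B : Matrix (Fin m) (Fin n) ℂ) :
    frobNorm (A - B) = frobNorm (B - A) := by
  rw [← neg_sub, frobNorm, frobNorm, conjTranspose_neg, Matrix.neg_mul, Matrix.mul_neg, neg_neg]

lemma frobNorm_mul_le_l2_opNorm_mul (A : Matrix (Fin m) (Fin n) ℂ)
    (M : Matrix (Fin n) (Fin k) ℂ) : frobNorm (A * M) ≤ ‖A‖ * frobNorm M := by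
  refine le_of_sq_le_sq ?_ (mul_nonneg (norm_nonneg _) (frobNorm_nonneg _))
  rw [mul_pow, frobNorm_sq, frobNorm_sq, Finset.mul_sum]
  gcongr with j
  rw [← mul_pow]
  gcongr
  exact A.l2_opNorm_mulVec (WithLp.toLp 2 (Mᵀ j))

lemma frobNorm_mul_le_frobNorm_mul_l2_opNorm (M : Matrix (Fin k) (Fin m) ℂ)
    (B : Matrix (Fin m) (Fin n) ℂ) : frobNorm (M * B) ≤ frobNorm M * ‖B‖ := by
  rw [← frobNorm_conjTranspose, conjTranspose_mul, ← frobNorm_conjTranspose M, mul_comm,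
    ← l2_opNorm_conjTranspose B]
  exact frobNorm_mul_le_l2_opNorm_mul _ _

end frobNorm

lemma l2_opNorm_inv_one_add_le_one {ι : Type*} [Fintype ι] [DecidableEq ι]
    {Q : Matrix ι ι ℂ} (hQ : Q.PosSemidef) : ‖(1 + Q)⁻¹‖ ≤ 1 := by
  lift 1 + Q to (Matrix ι ι ℂ)ˣ using (PosDef.one.add_posSemidef hQ).isUnit with P hP
  have h1P : 1 ≤ (P : Matrix ι ι ℂ) := hP ▸ le_add_of_nonneg_right hQ.nonneg
  rw [← coe_units_inv, CStarAlgebra.norm_le_one_iff_of_nonneg _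
    (CFC.inv_nonneg_of_nonneg P (zero_le_one.trans h1P))]
  exact CStarAlgebra.inv_le_one h1P

lemma l2_opNorm_conjTranspose_mul_mul_le {𝕜 ι κ : Type*} [RCLike 𝕜] [Fintype ι]
    [DecidableEq ι] [Fintype κ] [DecidableEq κ] (H : Matrix ι κ 𝕜) {S : Matrix ι ι 𝕜}
    (hS : ‖S‖ ≤ 1) :
    ‖Hᴴ * S * H‖ ≤ ‖Hᴴ * H‖ :=
  calc ‖Hᴴ * S * H‖ ≤ ‖Hᴴ‖ * ‖S‖ * ‖H‖ := by grw [l2_opNorm_mul, l2_opNorm_mul]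
    _ ≤ ‖H‖ * ‖H‖ := by grw [hS, l2_opNorm_conjTranspose, mul_one]
    _ = ‖Hᴴ * H‖ := (l2_opNorm_conjTranspose_mul_self H).symm

/-- For Hermitian positive semidefinite `X, Y`,
`‖Hᴴ(I + H X Hᴴ)⁻¹H (Y − X) Hᴴ(I + H Y Hᴴ)⁻¹H‖_F ≤ σ_max²(HᴴH) ‖X − Y‖_F`. -/
theorem stmt_11 {Nr Nt : ℕ}
    (H : Matrix (Fin Nr) (Fin Nt) ℂ)
    (X Y : Matrix (Fin Nt) (Fin Nt) ℂ)
    (hX : X.PosSemidef) (hY : Y.PosSemidef) :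
    frobNorm (Hᴴ * (1 + H * X * Hᴴ)⁻¹ * H * (Y - X) * (Hᴴ * (1 + H * Y * Hᴴ)⁻¹ * H))
      ≤ sigmaMax (Hᴴ * H) ^ 2 * frobNorm (X - Y) := by
  have hXH := l2_opNorm_conjTranspose_mul_mul_le H
    (l2_opNorm_inv_one_add_le_one (hX.mul_mul_conjTranspose_same H))
  have hYH := l2_opNorm_conjTranspose_mul_mul_le H
    (l2_opNorm_inv_one_add_le_one (hY.mul_mul_conjTranspose_same H))
  calc _ ≤ ‖Hᴴ * (1 + H * X * Hᴴ)⁻¹ * H‖ * frobNorm (Y - X)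
          * ‖Hᴴ * (1 + H * Y * Hᴴ)⁻¹ * H‖ := by
        grw [frobNorm_mul_le_frobNorm_mul_l2_opNorm, frobNorm_mul_le_l2_opNorm_mul]
    _ ≤ ‖Hᴴ * H‖ * frobNorm (Y - X) * ‖Hᴴ * H‖ :=
        mul_le_mul (mul_le_mul_of_nonneg_right hXH (frobNorm_nonneg _)) hYH (norm_nonneg _)
          (mul_nonneg (norm_nonneg _) (frobNorm_nonneg _))
    _ = sigmaMax (Hᴴ * H) ^ 2 * frobNorm (X - Y) := by
        rw [sigmaMax, l2_opNorm_toEuclideanCLM, frobNorm_sub_comm]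
        ring
end
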